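/- arXiv:2506.01746 — 8 statements merged into one kernel-verified Lean document; each statement's English description precedes it below -/
import Mathlib

section
/- If F and G are two C¹ strictly convex functions on a convex open set U ⊆ ℝ^d, then the Bregman divergences φ_F and φ_G coincide on U × U if and only if there exist α ∈ ℝ^d and β ∈ ℝ such that F(ξ) - G(ξ) = ⟨α, ξ⟩ + β for all ξ ∈ U. -/
open scoped InnerProductSpace

noncomputable def bregman {d : ℕ} (F : EuclideanSpace ℝ (Fin d) → ℝ)
    (f : EuclideanSpace ℝ (Fin d) → EuclideanSpace ℝ (Fin d))
    (ξ x : EuclideanSpace ℝ (Fin d)) : ℝ :=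
  F ξ - F x - ⟪f x, ξ - x⟫_ℝ

/-!
The difference of the two divergences is the divergence of `F - G` with gradient `f - g`.
Freezing the base point `x₀` shows that equal divergences force `F - G` to be affine, with slope
`f x₀ - g x₀`. Conversely, if `F - G` is affine with slope `α` on the open set `U`, uniqueness of
gradients gives `f - g = α` on `U`, and the divergence of an affine function vanishes.
-/

open Filter Topology

section Gradient

variable {E : Type*} [NormedAddCommGroup E] [InnerProductSpace ℝ E] [CompleteSpace E]
  {F G : E → ℝ} {f' g' x : E}

theorem HasGradientAt.sub (hF : HasGradientAt F f' x) (hG : HasGradientAt G g' x) :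
    HasGradientAt (fun y => F y - G y) (f' - g') x := by
  rw [hasGradientAt_iff_hasFDerivAt] at hF hG ⊢
  rw [map_sub]
  exact hF.sub hG

theorem hasGradientAt_inner_add_const (α : E) (β : ℝ) (x : E) :
    HasGradientAt (fun y => ⟪α, y⟫_ℝ + β) α x := by
  rw [hasGradientAt_iff_hasFDerivAt]
  exact ((innerSL ℝ α).hasFDerivAt.add_const β).congr_fderiv (by ext; simp)

theorem HasGradientAt.sub_eq_of_sub_eqOn_affine {U : Set E} (hU : IsOpen U) (hx : x ∈ U)
    (hF : HasGradientAt F f' x) (hG : HasGradientAt G g' x) {α : E} {β : ℝ}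
    (hFG : ∀ ξ ∈ U, F ξ - G ξ = ⟪α, ξ⟫_ℝ + β) : f' - g' = α := by
  have hlocal : (fun y => F y - G y) =ᶠ[𝓝 x] fun y => ⟪α, y⟫_ℝ + β :=
    eventually_of_mem (hU.mem_nhds hx) hFG
  exact (hF.sub hG).unique ((hasGradientAt_inner_add_const α β x).congr_of_eventuallyEq hlocal)

end Gradient

section Bregman

variable {d : ℕ} {F G : EuclideanSpace ℝ (Fin d) → ℝ}
  {f g : EuclideanSpace ℝ (Fin d) → EuclideanSpace ℝ (Fin d)}

theorem bregman_sub_bregman (ξ x : EuclideanSpace ℝ (Fin d)) :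
    bregman F f ξ x - bregman G g ξ x = (F ξ - G ξ) - (F x - G x) - ⟪f x - g x, ξ - x⟫_ℝ := by
  simp only [bregman, inner_sub_left]
  ring

theorem sub_eq_inner_add_of_bregman_eq {U : Set (EuclideanSpace ℝ (Fin d))}
    {x₀ : EuclideanSpace ℝ (Fin d)} (h : ∀ ξ ∈ U, bregman F f ξ x₀ = bregman G g ξ x₀) :
    ∀ ξ ∈ U, F ξ - G ξ = ⟪f x₀ - g x₀, ξ⟫_ℝ + (F x₀ - G x₀ - ⟪f x₀ - g x₀, x₀⟫_ℝ) := by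
  intro ξ hξ
  have h₀ := bregman_sub_bregman (F := F) (G := G) (f := f) (g := g) ξ x₀
  rw [h ξ hξ, sub_self, inner_sub_right] at h₀
  linarith

end Bregman

theorem stmt_1_general {d : ℕ} (U : Set (EuclideanSpace ℝ (Fin d)))
    (hUopen : IsOpen U) (hUne : U.Nonempty)
    (F G : EuclideanSpace ℝ (Fin d) → ℝ)
    (f g : EuclideanSpace ℝ (Fin d) → EuclideanSpace ℝ (Fin d))
    (hgradF : ∀ x ∈ U, HasGradientAt F (f x) x)
    (hgradG : ∀ x ∈ U, HasGradientAt G (g x) x) :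
    (∀ ξ ∈ U, ∀ x ∈ U, bregman F f ξ x = bregman G g ξ x) ↔
      ∃ (α : EuclideanSpace ℝ (Fin d)) (β : ℝ),
        ∀ ξ ∈ U, F ξ - G ξ = ⟪α, ξ⟫_ℝ + β := by
  constructor
  · intro h
    obtain ⟨x₀, hx₀⟩ := hUne
    exact ⟨_, _, sub_eq_inner_add_of_bregman_eq fun ξ hξ => h ξ hξ x₀ hx₀⟩
  · rintro ⟨α, β, hαβ⟩ ξ hξ x hx
    have hslope : f x - g x = α :=
      (hgradF x hx).sub_eq_of_sub_eqOn_affine hUopen hx (hgradG x hx) hαβ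
    rw [← sub_eq_zero, bregman_sub_bregman, hslope, hαβ ξ hξ, hαβ x hx, inner_sub_right]
    ring

theorem stmt_1 {d : ℕ} (U : Set (EuclideanSpace ℝ (Fin d)))
    (hUopen : IsOpen U) (hUconv : Convex ℝ U) (hUne : U.Nonempty)
    (F G : EuclideanSpace ℝ (Fin d) → ℝ)
    (f g : EuclideanSpace ℝ (Fin d) → EuclideanSpace ℝ (Fin d))
    (hF : ContDiffOn ℝ 1 F U) (hG : ContDiffOn ℝ 1 G U)
    (hgradF : ∀ x ∈ U, HasGradientAt F (f x) x)
    (hgradG : ∀ x ∈ U, HasGradientAt G (g x) x)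
    (hconvF : StrictConvexOn ℝ U F) (hconvG : StrictConvexOn ℝ U G) :
    (∀ ξ ∈ U, ∀ x ∈ U, bregman F f ξ x = bregman G g ξ x) ↔
      ∃ (α : EuclideanSpace ℝ (Fin d)) (β : ℝ),
        ∀ ξ ∈ U, F ξ - G ξ = ⟪α, ξ⟫_ℝ + β :=
  stmt_1_general U hUopen hUne F G f g hgradF hgradG
end

section
/- Let F be C¹ strictly convex on a convex open set U ⊆ ℝ^d. Fix ξ ∈ U and a unit vector v. Then the map t ↦ φ_F(ξ, ξ + t v), defined on the interval of t for which ξ + t v ∈ U, is strictly decreasing for t ≤ 0 and strictly increasing for t ≥ 0. -/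
open scoped InnerProductSpace

/-! Along the line `t ↦ ξ + t • v` one has `φ_F(ξ, ξ + t v) = g(0) + (t g'(t) - g(t))` with
`g(t) = F(ξ + t v)` strictly convex, and `t g'(t) - g(t)` has derivative `t g''(t)` in the smooth
case. Without second derivatives, the chord bounds `(t - s) g'(s) < g(t) - g(s) < (t - s) g'(t)`
together with the strict monotonicity of `g'` give the same sign pattern. -/

open Set

theorem StrictConvexOn.comp_affineMap {𝕜 E F β : Type*} [Ring 𝕜] [PartialOrder 𝕜]
    [AddCommGroup E] [Module 𝕜 E] [AddCommGroup F] [Module 𝕜 F]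
    [AddCommMonoid β] [PartialOrder β] [SMul 𝕜 β] {s : Set F} {f : F → β}
    (hf : StrictConvexOn 𝕜 s f) (g : E →ᵃ[𝕜] F) (hg : Function.Injective g) :
    StrictConvexOn 𝕜 (g ⁻¹' s) (f ∘ g) :=
  ⟨hf.1.affine_preimage g, fun _ hx _ hy hxy _ _ ha hb hab => by
    simpa only [Function.comp_apply, Convex.combo_affine_apply hab]
      using hf.2 hx hy (hg.ne hxy) ha hb hab⟩

theorem HasGradientAt.hasDerivAt_comp_line {E : Type*} [NormedAddCommGroup E]
    [InnerProductSpace ℝ E] [CompleteSpace E] {F : E → ℝ} {f' x v : E} {t : ℝ}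
    (hF : HasGradientAt F f' (x + t • v)) :
    HasDerivAt (fun t : ℝ => F (x + t • v)) ⟪f', v⟫_ℝ t := by
  have hline : HasDerivAt (fun t : ℝ => x + t • v) v t := by
    simpa using ((hasDerivAt_id t).smul_const v).const_add x
  have h := hF.hasFDerivAt.comp_hasDerivAt t hline
  rwa [InnerProductSpace.toDual_apply_apply] at h

section StrictConvexOn

variable {S : Set ℝ} {g g' : ℝ → ℝ}

theorem StrictConvexOn.mul_deriv_lt_sub_lt_mul_deriv (hg : StrictConvexOn ℝ S g)
    (hg' : ∀ t ∈ S, HasDerivAt g (g' t) t) {s t : ℝ} (hs : s ∈ S) (ht : t ∈ S) (hst : s < t) :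
    (t - s) * g' s < g t - g s ∧ g t - g s < (t - s) * g' t := by
  have hleft := hg.lt_slope_of_hasDerivAt hs ht hst (hg' s hs)
  have hright := hg.slope_lt_of_hasDerivAt hs ht hst (hg' t ht)
  rw [slope_def_field, lt_div_iff₀ (sub_pos.2 hst)] at hleft
  rw [slope_def_field, div_lt_iff₀ (sub_pos.2 hst)] at hright
  constructor <;> linarith

theorem StrictConvexOn.strictMonoOn_mul_deriv_sub (hg : StrictConvexOn ℝ S g)
    (hg' : ∀ t ∈ S, HasDerivAt g (g' t) t) :
    StrictMonoOn (fun t => t * g' t - g t) (S ∩ Ici 0) := by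
  rintro s ⟨hs, hs0⟩ t ⟨ht, -⟩ hst
  obtain ⟨hleft, hright⟩ := hg.mul_deriv_lt_sub_lt_mul_deriv hg' hs ht hst
  have hderiv_lt : g' s < g' t := lt_of_mul_lt_mul_left (hleft.trans hright) (sub_pos.2 hst).le
  have hmono : 0 ≤ s * (g' t - g' s) := mul_nonneg hs0 (sub_nonneg.2 hderiv_lt.le)
  dsimp only
  linarith

theorem StrictConvexOn.strictAntiOn_mul_deriv_sub (hg : StrictConvexOn ℝ S g)
    (hg' : ∀ t ∈ S, HasDerivAt g (g' t) t) :
    StrictAntiOn (fun t => t * g' t - g t) (S ∩ Iic 0) := by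
  rintro s ⟨hs, -⟩ t ⟨ht, ht0⟩ hst
  obtain ⟨hleft, hright⟩ := hg.mul_deriv_lt_sub_lt_mul_deriv hg' hs ht hst
  have hderiv_lt : g' s < g' t := lt_of_mul_lt_mul_left (hleft.trans hright) (sub_pos.2 hst).le
  have hmono : 0 ≤ t * (g' s - g' t) :=
    mul_nonneg_of_nonpos_of_nonpos ht0 (sub_nonpos.2 hderiv_lt.le)
  dsimp only
  linarith

end StrictConvexOn

theorem bregman_add_smul {d : ℕ} (F : EuclideanSpace ℝ (Fin d) → ℝ)
    (f : EuclideanSpace ℝ (Fin d) → EuclideanSpace ℝ (Fin d)) (ξ v : EuclideanSpace ℝ (Fin d))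
    (t : ℝ) :
    bregman F f ξ (ξ + t • v) = F ξ + (t * ⟪f (ξ + t • v), v⟫_ℝ - F (ξ + t • v)) := by
  rw [bregman, show ξ - (ξ + t • v) = (-t) • v by module, real_inner_smul_right]
  ring

theorem stmt_7_general {d : ℕ} (U : Set (EuclideanSpace ℝ (Fin d)))
    (F : EuclideanSpace ℝ (Fin d) → ℝ)
    (f : EuclideanSpace ℝ (Fin d) → EuclideanSpace ℝ (Fin d))
    (hgrad : ∀ x ∈ U, HasGradientAt F (f x) x)
    (hconv : StrictConvexOn ℝ U F)
    (ξ : EuclideanSpace ℝ (Fin d))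
    (v : EuclideanSpace ℝ (Fin d)) (hv : ‖v‖ = 1) :
    ∀ s t : ℝ, ξ + s • v ∈ U → ξ + t • v ∈ U →
      (s < t → t ≤ 0 →
        bregman F f ξ (ξ + t • v) < bregman F f ξ (ξ + s • v)) ∧
      (0 ≤ s → s < t →
        bregman F f ξ (ξ + s • v) < bregman F f ξ (ξ + t • v)) := by
  intro s t hs ht
  have hv0 : v ≠ 0 := norm_ne_zero_iff.1 (by simp [hv])
  have hline : StrictConvexOn ℝ {t : ℝ | ξ + t • v ∈ U} (fun t => F (ξ + t • v)) := by
    have hlineMap : (AffineMap.lineMap ξ (ξ + v) : ℝ → _) = fun t => ξ + t • v := by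
      ext1 t
      rw [AffineMap.lineMap_apply_module', add_sub_cancel_left, add_comm]
    have := hconv.comp_affineMap (AffineMap.lineMap ξ (ξ + v))
      (AffineMap.lineMap_injective ℝ (by simpa using hv0))
    rwa [hlineMap] at this
  have hderiv : ∀ t ∈ {t : ℝ | ξ + t • v ∈ U},
      HasDerivAt (fun t => F (ξ + t • v)) ⟪f (ξ + t • v), v⟫_ℝ t :=
    fun t ht => (hgrad _ ht).hasDerivAt_comp_line
  simp only [bregman_add_smul, add_lt_add_iff_left]
  refine ⟨fun hst ht0 => ?_, fun hs0 hst => ?_⟩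
  · exact hline.strictAntiOn_mul_deriv_sub hderiv ⟨hs, hst.le.trans ht0⟩ ⟨ht, ht0⟩ hst
  · exact hline.strictMonoOn_mul_deriv_sub hderiv ⟨hs, hs0⟩ ⟨ht, hs0.trans hst.le⟩ hst

theorem stmt_7 {d : ℕ} (U : Set (EuclideanSpace ℝ (Fin d)))
    (hUopen : IsOpen U) (hUconv : Convex ℝ U)
    (F : EuclideanSpace ℝ (Fin d) → ℝ)
    (f : EuclideanSpace ℝ (Fin d) → EuclideanSpace ℝ (Fin d))
    (hF : ContDiffOn ℝ 1 F U)
    (hgrad : ∀ x ∈ U, HasGradientAt F (f x) x)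
    (hconv : StrictConvexOn ℝ U F)
    (ξ : EuclideanSpace ℝ (Fin d)) (hξ : ξ ∈ U)
    (v : EuclideanSpace ℝ (Fin d)) (hv : ‖v‖ = 1) :
    ∀ s t : ℝ, ξ + s • v ∈ U → ξ + t • v ∈ U →
      (s < t → t ≤ 0 →
        bregman F f ξ (ξ + t • v) < bregman F f ξ (ξ + s • v)) ∧
      (0 ≤ s → s < t →
        bregman F f ξ (ξ + s • v) < bregman F f ξ (ξ + t • v)) :=
  stmt_7_general U F f hgrad hconv ξ v hv
end

section
/- Let F be C¹ strictly convex on a convex open set U ⊆ ℝ^d, let P be a probability measure with P(U) = 1 having a finite first moment and with ∫|F| dP < ∞, and let m = ∫ ξ dP(ξ). Then m ∈ U and for every x ∈ U: ∫ φ_F(ξ, x) dP(ξ) = ∫ F dP − F(m) + φ_F(m, x). In particular the distortion G₁(x) = ∫ φ_F(ξ, x) dP(ξ) attains its unique minimum over U at x = m, with minimum value ∫ F dP − F(m). -/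
open scoped InnerProductSpace

/-! The Bregman divergence `φ_F(ξ, x)` is affine in `ξ`, so its `P`-integral only sees the mean
`m`: it equals `∫ F dP - F x - ⟪∇F x, m - x⟫`, which rearranges to `∫ F dP - F m + φ_F(m, x)`.
The mean lies in `U` since otherwise a continuous functional `ℓ` separating `m` from the open
convex set `U` would satisfy `ℓ ξ < ℓ m` for `P`-a.e. `ξ`, contradicting `∫ ℓ dP = ℓ m`.
Strict convexity makes `φ_F(m, x) > 0` for `x ≠ m`, so `m` is the unique minimiser. -/

open MeasureTheory

section Convexity

variable {E : Type*} [NormedAddCommGroup E] [NormedSpace ℝ E] {s : Set E} {φ : E → ℝ}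
  {φ' : E →L[ℝ] ℝ} {x y : E}

theorem ConvexOn.fderiv_sub_le (hφ : ConvexOn ℝ s φ) (hx : x ∈ s) (hy : y ∈ s)
    (hφ' : HasFDerivAt φ φ' x) : φ' (y - x) ≤ φ y - φ x := by
  set line : ℝ →ᵃ[ℝ] E := AffineMap.lineMap x y
  have hline : HasDerivAt line (y - x) 0 := AffineMap.hasDerivAt_lineMap
  have hcomp : HasDerivAt (φ ∘ line) (φ' (y - x)) 0 :=
    HasFDerivAt.comp_hasDerivAt 0 (by simpa [line] using hφ') hline
  have := (hφ.comp_affineMap line).le_slope_of_hasDerivAt (x := 0) (y := 1)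
    (by simpa [line] using hx) (by simpa [line] using hy) zero_lt_one hcomp
  simpa [slope_def_field, line] using this

theorem StrictConvexOn.fderiv_sub_lt (hφ : StrictConvexOn ℝ s φ) (hx : x ∈ s) (hy : y ∈ s)
    (hxy : x ≠ y) (hφ' : HasFDerivAt φ φ' x) : φ' (y - x) < φ y - φ x := by
  -- the non-strict inequality towards the midpoint, where strict convexity leaves a gap
  set z : E := (1 / 2 : ℝ) • x + (1 / 2 : ℝ) • y
  have hz : z ∈ s := hφ.1 hx hy (by norm_num) (by norm_num) (by norm_num)
  have hmid : φ z < (1 / 2 : ℝ) • φ x + (1 / 2 : ℝ) • φ y :=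
    hφ.2 hx hy hxy (by norm_num) (by norm_num) (by norm_num)
  have hzx : z - x = (1 / 2 : ℝ) • (y - x) := by module
  have := hφ.convexOn.fderiv_sub_le hx hz hφ'
  rw [hzx, map_smul, smul_eq_mul] at this
  simp only [smul_eq_mul] at hmid
  linarith

end Convexity

theorem Convex.integral_mem_of_isOpen {α E : Type*} [MeasurableSpace α]
    [NormedAddCommGroup E] [NormedSpace ℝ E] [CompleteSpace E] {μ : Measure α}
    [IsProbabilityMeasure μ] {s : Set E} {g : α → E} (hs : Convex ℝ s) (hso : IsOpen s)
    (hg : Integrable g μ) (hgs : ∀ᵐ a ∂μ, g a ∈ s) : ∫ a, g a ∂μ ∈ s := by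
  by_contra hmean
  obtain ⟨ℓ, hℓ⟩ := geometric_hahn_banach_open_point hs hso hmean
  have hℓg : Integrable (fun a => ℓ (g a)) μ := ℓ.integrable_comp hg
  have hgap_int : ∫ a, (ℓ (∫ a, g a ∂μ) - ℓ (g a)) ∂μ = 0 := by
    rw [integral_sub (integrable_const _) hℓg, integral_const, ℓ.integral_comp_comm hg]
    simp
  have hgap_pos : ∀ᵐ a ∂μ, 0 < ℓ (∫ a, g a ∂μ) - ℓ (g a) :=
    hgs.mono fun a ha => sub_pos.mpr (hℓ _ ha)
  have hgap_zero := (integral_eq_zero_iff_of_nonneg_ae (hgap_pos.mono fun _ h => h.le)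
    ((integrable_const _).sub hℓg)).mp hgap_int
  obtain ⟨a, hzero, hpos⟩ := (hgap_zero.and hgap_pos).exists
  exact hpos.ne' hzero

theorem integral_bregman {d : ℕ} {F : EuclideanSpace ℝ (Fin d) → ℝ}
    {f : EuclideanSpace ℝ (Fin d) → EuclideanSpace ℝ (Fin d)}
    {P : Measure (EuclideanSpace ℝ (Fin d))} [IsProbabilityMeasure P]
    (hmom : Integrable (fun ξ => ξ) P) (hFint : Integrable F P) (x : EuclideanSpace ℝ (Fin d)) :
    ∫ ξ, bregman F f ξ x ∂P = (∫ ξ, F ξ ∂P) - F x - ⟪f x, (∫ ξ, ξ ∂P) - x⟫_ℝ := by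
  have hsub : Integrable (fun ξ => ξ - x) P := hmom.sub (integrable_const x)
  have hinner : Integrable (fun ξ => ⟪f x, ξ - x⟫_ℝ) P := (innerSL ℝ (f x)).integrable_comp hsub
  have hshift : Integrable (fun ξ => F ξ - F x) P := hFint.sub (integrable_const _)
  unfold bregman
  rw [integral_sub hshift hinner,
    integral_sub hFint (integrable_const (F x)), integral_inner hsub,
    integral_sub hmom (integrable_const x)]
  simp

open MeasureTheory in
theorem stmt_9_general {d : ℕ} (U : Set (EuclideanSpace ℝ (Fin d)))
    (hUopen : IsOpen U) (hUconv : Convex ℝ U)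
    (F : EuclideanSpace ℝ (Fin d) → ℝ)
    (f : EuclideanSpace ℝ (Fin d) → EuclideanSpace ℝ (Fin d))
    (hgrad : ∀ x ∈ U, HasGradientAt F (f x) x)
    (hconv : StrictConvexOn ℝ U F)
    (P : Measure (EuclideanSpace ℝ (Fin d))) [IsProbabilityMeasure P]
    (hPU : P U = 1)
    (hmom : Integrable (fun ξ => ξ) P)
    (hFint : Integrable F P) :
    (∫ ξ, ξ ∂P) ∈ U ∧
    (∀ x ∈ U,
      ∫ ξ, bregman F f ξ x ∂P =
        (∫ ξ, F ξ ∂P) - F (∫ ξ, ξ ∂P) + bregman F f (∫ ξ, ξ ∂P) x) ∧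
    (∫ ξ, bregman F f ξ (∫ ξ, ξ ∂P) ∂P = (∫ ξ, F ξ ∂P) - F (∫ ξ, ξ ∂P)) ∧
    (∀ x ∈ U, x ≠ (∫ ξ, ξ ∂P) →
      ∫ ξ, bregman F f ξ (∫ ξ, ξ ∂P) ∂P < ∫ ξ, bregman F f ξ x ∂P) := by
  set m := ∫ ξ, ξ ∂P
  have hmU : m ∈ U := hUconv.integral_mem_of_isOpen hUopen hmom
    ((ae_iff_measure_eq hUopen.measurableSet.nullMeasurableSet).mpr (hPU.trans measure_univ.symm))
  have hmin : ∫ ξ, bregman F f ξ m ∂P = (∫ ξ, F ξ ∂P) - F m := by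
    rw [integral_bregman hmom hFint, sub_self, inner_zero_right, sub_zero]
  refine ⟨hmU, fun x _ => ?_, hmin, fun x hx hxm => ?_⟩
  · rw [integral_bregman hmom hFint, bregman]
    ring
  · have := hconv.fderiv_sub_lt hx hmU hxm (hgrad x hx).hasFDerivAt
    rw [InnerProductSpace.toDual_apply_apply] at this
    rw [hmin, integral_bregman hmom hFint]
    linarith

open MeasureTheory in
theorem stmt_9 {d : ℕ} (U : Set (EuclideanSpace ℝ (Fin d)))
    (hUopen : IsOpen U) (hUconv : Convex ℝ U) (hUne : U.Nonempty)
    (F : EuclideanSpace ℝ (Fin d) → ℝ)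
    (f : EuclideanSpace ℝ (Fin d) → EuclideanSpace ℝ (Fin d))
    (hF : ContDiffOn ℝ 1 F U)
    (hgrad : ∀ x ∈ U, HasGradientAt F (f x) x)
    (hconv : StrictConvexOn ℝ U F)
    (P : Measure (EuclideanSpace ℝ (Fin d))) [IsProbabilityMeasure P]
    (hPU : P U = 1)
    (hmom : Integrable (fun ξ => ξ) P)
    (hFint : Integrable F P) :
    (∫ ξ, ξ ∂P) ∈ U ∧
    (∀ x ∈ U,
      ∫ ξ, bregman F f ξ x ∂P =
        (∫ ξ, F ξ ∂P) - F (∫ ξ, ξ ∂P) + bregman F f (∫ ξ, ξ ∂P) x) ∧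
    (∫ ξ, bregman F f ξ (∫ ξ, ξ ∂P) ∂P = (∫ ξ, F ξ ∂P) - F (∫ ξ, ξ ∂P)) ∧
    (∀ x ∈ U, x ≠ (∫ ξ, ξ ∂P) →
      ∫ ξ, bregman F f ξ (∫ ξ, ξ ∂P) ∂P < ∫ ξ, bregman F f ξ x ∂P) :=
  stmt_9_general U hUopen hUconv F f hgrad hconv P hPU hmom hFint
end

section
/- Let F be C¹ strictly convex on a convex open set U ⊆ ℝ^d, P a probability measure with P(U)=1 satisfying ∫(|ξ| ∨ |F(ξ)|)^{r/2} dP < ∞ for some r > 0. Let (z_k)_{k≥1} be a sequence dense in U. Then G_{r,n}(z_1,…,z_n) := ∫ min_{1≤i≤n} φ_F(ξ, z_i)^{r/2} dP(ξ) decreases to 0 as n → ∞. In particular the optimal quantization errors e_{r,n}(P, φ_F) tend to 0 as n → ∞. -/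
/-!
By convexity of `F`, `φ_F(ξ, a) ≥ 0` for `ξ, a ∈ U`, and `φ_F(ξ, ·)` is continuous on `U` (the
gradient of a `C¹` function is continuous) and vanishes at `ξ`. Density of `(z_k)` therefore makes
`min_{i ≤ n} φ_F(ξ, z_i)^{r/2}` decrease to `0` for `P`-a.e. `ξ`. These functions are dominated by
`φ_F(·, z_0)^{r/2}`, which is integrable because `|φ_F(ξ, a)|` grows at most linearly in
`|ξ| ∨ |F(ξ)|`, so dominated convergence gives `G_{r,n} → 0`. Finally `{z_0, …, z_n}` is an
admissible codebook, so `0 ≤ e_{r,n+1}^r ≤ G_{r,n}`.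
-/

open scoped InnerProductSpace

open MeasureTheory Filter Topology Set

lemma continuousOn_of_hasGradientAt_of_contDiffOn {E : Type*} [NormedAddCommGroup E]
    [InnerProductSpace ℝ E] [CompleteSpace E] {U : Set E} {F : E → ℝ} {f : E → E}
    (hU : IsOpen U) (hF : ContDiffOn ℝ 1 F U) (hgrad : ∀ x ∈ U, HasGradientAt F (f x) x) :
    ContinuousOn f U := by
  refine ((InnerProductSpace.toDual ℝ E).symm.continuous.comp_continuousOn
    (hF.continuousOn_fderiv_of_isOpen hU le_rfl)).congr fun x hx => ?_
  simp [(hgrad x hx).hasFDerivAt.fderiv]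

section Bregman

variable {d : ℕ} {F : EuclideanSpace ℝ (Fin d) → ℝ}
  {f : EuclideanSpace ℝ (Fin d) → EuclideanSpace ℝ (Fin d)}

@[simp]
lemma bregman_self (ξ : EuclideanSpace ℝ (Fin d)) : bregman F f ξ ξ = 0 := by
  simp [bregman]

lemma bregman_nonneg {U : Set (EuclideanSpace ℝ (Fin d))} (hconv : ConvexOn ℝ U F)
    {ξ x : EuclideanSpace ℝ (Fin d)} (hξ : ξ ∈ U) (hx : x ∈ U) (hfx : HasGradientAt F (f x) x) :
    0 ≤ bregman F f ξ x := by
  set γ := AffineMap.lineMap (k := ℝ) x ξ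
  have hderiv : HasDerivAt (F ∘ γ) ⟪f x, ξ - x⟫_ℝ 0 := by
    have hFγ : HasFDerivAt F (InnerProductSpace.toDual ℝ _ (f x)) (γ 0) := by
      simpa [γ] using hfx.hasFDerivAt
    simpa using hFγ.comp_hasDerivAt (0 : ℝ) AffineMap.hasDerivAt_lineMap
  have hslope := (hconv.comp_affineMap γ).le_slope_of_hasDerivAt (x := 0) (y := 1)
    (by simpa [γ]) (by simpa [γ]) one_pos hderiv
  simp only [slope, Function.comp_apply, γ, AffineMap.lineMap_apply_zero,
    AffineMap.lineMap_apply_one, vsub_eq_sub, sub_zero, inv_one, one_smul] at hslope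
  rw [bregman]
  linarith

lemma continuousOn_bregman {U : Set (EuclideanSpace ℝ (Fin d))} (hF : ContinuousOn F U)
    (hf : ContinuousOn f U) (ξ : EuclideanSpace ℝ (Fin d)) : ContinuousOn (bregman F f ξ) U :=
  (continuousOn_const.sub hF).sub (hf.inner (continuousOn_const.sub continuousOn_id))

lemma abs_bregman_le (ξ x : EuclideanSpace ℝ (Fin d)) :
    |bregman F f ξ x| ≤ (1 + ‖f x‖) * max ‖ξ‖ |F ξ| + (|F x| + ‖f x‖ * ‖x‖) := by
  have hinner : |⟪f x, ξ - x⟫_ℝ| ≤ ‖f x‖ * (‖ξ‖ + ‖x‖) :=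
    (abs_real_inner_le_norm _ _).trans (by gcongr; exact norm_sub_le _ _)
  have hξ : ‖f x‖ * ‖ξ‖ ≤ ‖f x‖ * max ‖ξ‖ |F ξ| := by gcongr; exact le_max_left _ _
  have hFξ : |F ξ| ≤ max ‖ξ‖ |F ξ| := le_max_right _ _
  have h₁ := abs_sub (F ξ - F x) ⟪f x, ξ - x⟫_ℝ
  have h₂ := abs_sub (F ξ) (F x)
  rw [bregman]
  nlinarith

lemma aemeasurable_bregman {μ : Measure (EuclideanSpace ℝ (Fin d))} (hF : AEMeasurable F μ)
    (x : EuclideanSpace ℝ (Fin d)) : AEMeasurable (fun ξ => bregman F f ξ x) μ :=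
  (hF.sub_const _).sub (continuous_const.inner (continuous_id.sub continuous_const)).aemeasurable

lemma memLp_bregman {μ : Measure (EuclideanSpace ℝ (Fin d))} [IsFiniteMeasure μ] {p : ENNReal}
    (hF : AEMeasurable F μ) (hmom : MemLp (fun ξ => max ‖ξ‖ |F ξ|) p μ)
    (x : EuclideanSpace ℝ (Fin d)) : MemLp (fun ξ => bregman F f ξ x) p μ := by
  refine ((hmom.const_mul (1 + ‖f x‖)).add (memLp_const (|F x| + ‖f x‖ * ‖x‖))).of_le
    (aemeasurable_bregman hF x).aestronglyMeasurable (Eventually.of_forall fun ξ => ?_)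
  rw [Real.norm_eq_abs, Real.norm_of_nonneg (by simp only [Pi.add_apply]; positivity)]
  exact abs_bregman_le ξ x

lemma integrable_bregman_rpow {μ : Measure (EuclideanSpace ℝ (Fin d))} [IsFiniteMeasure μ]
    {q : ℝ} (hq : 0 < q) (hF : AEMeasurable F μ)
    (hmom : Integrable (fun ξ => (max ‖ξ‖ |F ξ|) ^ q) μ) (x : EuclideanSpace ℝ (Fin d)) :
    Integrable (fun ξ => bregman F f ξ x ^ q) μ := by
  have hM : MemLp (fun ξ => max ‖ξ‖ |F ξ|) (ENNReal.ofReal q) μ := by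
    refine (integrable_norm_rpow_iff (by fun_prop) (by simpa using hq) ENNReal.ofReal_ne_top).1 ?_
    have hnorm (ξ : EuclideanSpace ℝ (Fin d)) : ‖max ‖ξ‖ |F ξ|‖ = max ‖ξ‖ |F ξ| :=
      Real.norm_of_nonneg (le_max_of_le_left (norm_nonneg ξ))
    simpa only [ENNReal.toReal_ofReal hq.le, hnorm] using hmom
  refine ((memLp_bregman (f := f) hF hM x).integrable_norm_rpow (by simpa using hq)
    ENNReal.ofReal_ne_top).mono' ?_ (Eventually.of_forall fun ξ => ?_)
  · exact ((aemeasurable_bregman hF x).pow_const q).aestronglyMeasurable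
  -- `|b ^ q| ≤ |b| ^ q` holds for `b < 0` as well, so no sign information is needed
  · simpa [ENNReal.toReal_ofReal hq.le] using Real.abs_rpow_le_abs_rpow (bregman F f ξ x) q

end Bregman

lemma iInf_fin_succ_le (g : ℕ → ℝ) {n k : ℕ} (hk : k ≤ n) : ⨅ i : Fin (n + 1), g i ≤ g k :=
  ciInf_le (finite_range _).bddBelow (⟨k, Nat.lt_succ_of_le hk⟩ : Fin (n + 1))

lemma antitone_iInf_fin_succ (g : ℕ → ℝ) : Antitone fun n : ℕ => ⨅ i : Fin (n + 1), g i :=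
  antitone_nat_of_succ_le fun _ =>
    le_ciInf fun i => ciInf_le (finite_range _).bddBelow i.castSucc

lemma tendsto_iInf_fin_succ_of_mem_closure {X : Type*} [TopologicalSpace X] {g : X → ℝ}
    {z : ℕ → X} {x : X} (hx : x ∈ closure (range z)) (hg : ContinuousAt g x) (hgx : g x = 0)
    (hg_nonneg : ∀ k, 0 ≤ g (z k)) :
    Tendsto (fun n : ℕ => ⨅ i : Fin (n + 1), g (z i)) atTop (𝓝 0) := by
  refine tendsto_order.2 ⟨fun b hb => Eventually.of_forall fun n =>
    hb.trans_le (le_ciInf fun i => hg_nonneg i), fun ε hε => ?_⟩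
  obtain ⟨_, hy, k, rfl⟩ := mem_closure_iff_nhds.1 hx _ (hg (Iio_mem_nhds (hgx ▸ hε)))
  exact eventually_atTop.2 ⟨k, fun n hn => (iInf_fin_succ_le (g ∘ z) hn).trans_lt hy⟩

section IntegralIInf

variable {α : Type*} [MeasurableSpace α] {μ : Measure α} {g : ℕ → α → ℝ}

lemma integrable_iInf_fin_succ (hg : ∀ k, AEMeasurable (g k) μ) (hg0 : Integrable (g 0) μ)
    (hg_nonneg : ∀ᵐ ξ ∂μ, ∀ k, 0 ≤ g k ξ) (n : ℕ) :
    Integrable (fun ξ => ⨅ i : Fin (n + 1), g i ξ) μ := by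
  refine hg0.mono' (AEMeasurable.iInf fun i : Fin (n + 1) => hg i).aestronglyMeasurable ?_
  filter_upwards [hg_nonneg] with ξ hξ
  rw [Real.norm_of_nonneg (le_ciInf fun i : Fin (n + 1) => hξ i)]
  exact iInf_fin_succ_le (g · ξ) n.zero_le

lemma antitone_integral_iInf_fin_succ (hg : ∀ k, AEMeasurable (g k) μ)
    (hg0 : Integrable (g 0) μ) (hg_nonneg : ∀ᵐ ξ ∂μ, ∀ k, 0 ≤ g k ξ) :
    Antitone fun n : ℕ => ∫ ξ, (⨅ i : Fin (n + 1), g i ξ) ∂μ := fun _ _ hmn =>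
  integral_mono (integrable_iInf_fin_succ hg hg0 hg_nonneg _)
    (integrable_iInf_fin_succ hg hg0 hg_nonneg _) fun ξ => antitone_iInf_fin_succ (g · ξ) hmn

lemma tendsto_integral_iInf_fin_succ (hg : ∀ k, AEMeasurable (g k) μ)
    (hg0 : Integrable (g 0) μ) (hg_nonneg : ∀ᵐ ξ ∂μ, ∀ k, 0 ≤ g k ξ)
    (hlim : ∀ᵐ ξ ∂μ, Tendsto (fun n : ℕ => ⨅ i : Fin (n + 1), g i ξ) atTop (𝓝 0)) :
    Tendsto (fun n : ℕ => ∫ ξ, (⨅ i : Fin (n + 1), g i ξ) ∂μ) atTop (𝓝 0) := by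
  have hdom : ∀ n : ℕ, ∀ᵐ ξ ∂μ, ‖⨅ i : Fin (n + 1), g i ξ‖ ≤ g 0 ξ := fun n => by
    filter_upwards [hg_nonneg] with ξ hξ
    rw [Real.norm_of_nonneg (le_ciInf fun i : Fin (n + 1) => hξ i)]
    exact iInf_fin_succ_le (g · ξ) n.zero_le
  simpa using tendsto_integral_of_dominated_convergence (g 0)
    (fun n => (AEMeasurable.iInf fun i : Fin (n + 1) => hg i).aestronglyMeasurable) hg0 hdom hlim

end IntegralIInf

section Codebook

variable {X : Type*} [MeasurableSpace X] {μ : Measure X} {U : Set X} {φ : X → X → ℝ}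

/-- For `φ ξ a = φ_F(ξ, a) ^ (r / 2)`, the infimum of this set is `e_{r,n}(P, φ_F) ^ r`. -/
def codebookDistortions (μ : Measure X) (U : Set X) (φ : X → X → ℝ) (n : ℕ) : Set ℝ :=
  {y | ∃ (Γ : Finset X) (hΓ : Γ.Nonempty), ↑Γ ⊆ U ∧ Γ.card ≤ n ∧ y = ∫ ξ, Γ.inf' hΓ (φ ξ) ∂μ}

lemma nonneg_of_mem_codebookDistortions (hφ : ∀ᵐ ξ ∂μ, ∀ a ∈ U, 0 ≤ φ ξ a) {n : ℕ} {y : ℝ}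
    (hy : y ∈ codebookDistortions μ U φ n) : 0 ≤ y := by
  obtain ⟨Γ, hΓ, hΓU, -, rfl⟩ := hy
  exact integral_nonneg_of_ae <| by
    filter_upwards [hφ] with ξ hξ using Finset.le_inf' hΓ _ fun a ha => hξ a (hΓU ha)

lemma integral_iInf_fin_mem_codebookDistortions {z : ℕ → X} (hz : ∀ k, z k ∈ U) (n : ℕ) :
    ∫ ξ, (⨅ i : Fin (n + 1), φ ξ (z i)) ∂μ ∈ codebookDistortions μ U φ (n + 1) := by
  classical
  refine ⟨Finset.univ.image fun i : Fin (n + 1) => z i, Finset.univ_nonempty.image _, ?_,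
    Finset.card_image_le.trans (by simp), ?_⟩
  · simpa [range_subset_iff] using fun i : Fin (n + 1) => hz i
  · simp_rw [Finset.inf'_image, Finset.inf'_univ_eq_ciInf]
    rfl

lemma tendsto_sInf_codebookDistortions (hφ : ∀ᵐ ξ ∂μ, ∀ a ∈ U, 0 ≤ φ ξ a) {z : ℕ → X}
    (hz : ∀ k, z k ∈ U)
    (hG : Tendsto (fun n : ℕ => ∫ ξ, (⨅ i : Fin (n + 1), φ ξ (z i)) ∂μ) atTop (𝓝 0)) :
    Tendsto (fun n => sInf (codebookDistortions μ U φ n)) atTop (𝓝 0) := by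
  rw [← tendsto_add_atTop_iff_nat 1]
  refine tendsto_of_tendsto_of_tendsto_of_le_of_le tendsto_const_nhds hG
    (fun n => Real.sInf_nonneg fun y hy => nonneg_of_mem_codebookDistortions hφ hy) fun n => ?_
  exact csInf_le ⟨0, fun y hy => nonneg_of_mem_codebookDistortions hφ hy⟩
    (integral_iInf_fin_mem_codebookDistortions hz n)

end Codebook

open MeasureTheory Filter in
theorem stmt_12_general {d : ℕ} (U : Set (EuclideanSpace ℝ (Fin d)))
    (hUopen : IsOpen U)
    (F : EuclideanSpace ℝ (Fin d) → ℝ)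
    (f : EuclideanSpace ℝ (Fin d) → EuclideanSpace ℝ (Fin d))
    (hF : ContDiffOn ℝ 1 F U)
    (hgrad : ∀ x ∈ U, HasGradientAt F (f x) x)
    (hconv : StrictConvexOn ℝ U F)
    (r : ℝ) (hr : 0 < r)
    (P : Measure (EuclideanSpace ℝ (Fin d))) [IsProbabilityMeasure P]
    (hPU : P U = 1)
    (hmom : Integrable (fun ξ => (max ‖ξ‖ |F ξ|) ^ (r / 2)) P)
    (z : ℕ → EuclideanSpace ℝ (Fin d))
    (hzU : ∀ k, z k ∈ U)
    (hdense : U ⊆ closure (Set.range z)) :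
    Antitone (fun n : ℕ =>
        ∫ ξ, (⨅ i : Fin (n + 1), bregman F f ξ (z i) ^ (r / 2)) ∂P) ∧
    Tendsto (fun n : ℕ =>
        ∫ ξ, (⨅ i : Fin (n + 1), bregman F f ξ (z i) ^ (r / 2)) ∂P)
      atTop (nhds 0) ∧
    Tendsto (fun n : ℕ =>
        sInf {y : ℝ | ∃ (Γ : Finset (EuclideanSpace ℝ (Fin d))) (hΓ : Γ.Nonempty),
          ↑Γ ⊆ U ∧ Γ.card ≤ n ∧
          y = ∫ ξ, (Γ.inf' hΓ fun a => bregman F f ξ a ^ (r / 2)) ∂P})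
      atTop (nhds 0) := by
  have hq : 0 < r / 2 := half_pos hr
  have hU : ∀ᵐ ξ ∂P, ξ ∈ U := by
    rwa [ae_mem_iff_measure_eq hUopen.measurableSet.nullMeasurableSet, measure_univ]
  have hFm : AEMeasurable F P := by
    simpa [Measure.restrict_eq_self_of_ae_mem hU] using
      hF.continuousOn.aemeasurable (μ := P) hUopen.measurableSet
  have hφ : ∀ᵐ ξ ∂P, ∀ a ∈ U, 0 ≤ bregman F f ξ a ^ (r / 2) :=
    hU.mono fun ξ hξ a ha => Real.rpow_nonneg (bregman_nonneg hconv.convexOn hξ ha (hgrad a ha)) _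
  have hg_nonneg : ∀ᵐ ξ ∂P, ∀ k, 0 ≤ bregman F f ξ (z k) ^ (r / 2) :=
    hφ.mono fun ξ hξ k => hξ _ (hzU k)
  have hlim : ∀ᵐ ξ ∂P, Tendsto
      (fun n : ℕ => ⨅ i : Fin (n + 1), bregman F f ξ (z i) ^ (r / 2)) atTop (𝓝 0) := by
    filter_upwards [hU, hg_nonneg] with ξ hξ hξ_nonneg
    have hcont := continuousOn_bregman hF.continuousOn
      (continuousOn_of_hasGradientAt_of_contDiffOn hUopen hF hgrad) ξ
    exact tendsto_iInf_fin_succ_of_mem_closure (g := fun x => bregman F f ξ x ^ (r / 2))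
      (hdense hξ) ((hcont.continuousAt (hUopen.mem_nhds hξ)).rpow_const (Or.inr hq.le))
      (by simp [hq.ne']) hξ_nonneg
  have hmeas k := (aemeasurable_bregman (f := f) hFm (z k)).pow_const (r / 2)
  have hint := integrable_bregman_rpow (f := f) hq hFm hmom (z 0)
  have hG := tendsto_integral_iInf_fin_succ hmeas hint hg_nonneg hlim
  exact ⟨antitone_integral_iInf_fin_succ hmeas hint hg_nonneg, hG,
    tendsto_sInf_codebookDistortions hφ hzU hG⟩

open MeasureTheory Filter in
theorem stmt_12 {d : ℕ} (U : Set (EuclideanSpace ℝ (Fin d)))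
    (hUopen : IsOpen U) (hUconv : Convex ℝ U)
    (F : EuclideanSpace ℝ (Fin d) → ℝ)
    (f : EuclideanSpace ℝ (Fin d) → EuclideanSpace ℝ (Fin d))
    (hF : ContDiffOn ℝ 1 F U)
    (hgrad : ∀ x ∈ U, HasGradientAt F (f x) x)
    (hconv : StrictConvexOn ℝ U F)
    (r : ℝ) (hr : 0 < r)
    (P : Measure (EuclideanSpace ℝ (Fin d))) [IsProbabilityMeasure P]
    (hPU : P U = 1)
    (hmom : Integrable (fun ξ => (max ‖ξ‖ |F ξ|) ^ (r / 2)) P)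
    (z : ℕ → EuclideanSpace ℝ (Fin d))
    (hzU : ∀ k, z k ∈ U)
    (hdense : U ⊆ closure (Set.range z)) :
    Antitone (fun n : ℕ =>
        ∫ ξ, (⨅ i : Fin (n + 1), bregman F f ξ (z i) ^ (r / 2)) ∂P) ∧
    Tendsto (fun n : ℕ =>
        ∫ ξ, (⨅ i : Fin (n + 1), bregman F f ξ (z i) ^ (r / 2)) ∂P)
      atTop (nhds 0) ∧
    Tendsto (fun n : ℕ =>
        sInf {y : ℝ | ∃ (Γ : Finset (EuclideanSpace ℝ (Fin d))) (hΓ : Γ.Nonempty),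
          ↑Γ ⊆ U ∧ Γ.card ≤ n ∧
          y = ∫ ξ, (Γ.inf' hΓ fun a => bregman F f ξ a ^ (r / 2)) ∂P})
      atTop (nhds 0) :=
  stmt_12_general U hUopen F f hF hgrad hconv r hr P hPU hmom z hzU hdense
end

section
/- Let F be C¹ strictly convex on a convex open set U ⊆ ℝ^d, let P satisfy ∫(|ξ| ∨ |F(ξ)|) dP < ∞ with P(U)=1, and let x = (x_1,…,x_n) ∈ U^n be a stationary quantizer: the boundaries of its Bregman–Voronoi cells C_i(x) are P-negligible and x_i = E[X | X ∈ C_i(x)] whenever P(C_i(x)) > 0, where X ∼ P. Let X̂ = Σ_i x_i 1_{C_i(x)}(X). Then E[φ_F(X, X̂)] = E[F(X)] − E[F(X̂)]. -/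
/-!
Expanding the Bregman divergence, `E[φ_F(X, X̂)] = E[F(X)] - E[F(X̂)] - E⟨∇F(X̂), X - X̂⟩`, and the
last term vanishes: on each cell `C i` it equals `⟨∇F(x i), ∫_{C i} (ξ - x i) dP⟩`, which is zero
because `x i` is the barycentre of `P` on `C i`.
-/

open scoped InnerProductSpace

namespace MeasureTheory

section Cells

variable {α ι β G : Type*} [MeasurableSpace α] {μ : Measure α} {C : ι → Set α}
  [NormedAddCommGroup G]

theorem integrable_comp_of_eq_on_cells [Finite ι] (hCmeas : ∀ i, MeasurableSet (C i))
    (hae : ∀ᵐ a ∂μ, a ∈ ⋃ i, C i) {q : α → β} {x : ι → β} (hq : ∀ i, ∀ a ∈ C i, q a = x i)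
    {Φ : β → α → G} (hΦ : ∀ i, IntegrableOn (Φ (x i)) (C i) μ) :
    Integrable (fun a => Φ (q a) a) μ := by
  rw [← Measure.restrict_eq_self_of_ae_mem hae]
  exact integrableOn_finite_iUnion.2 fun i =>
    (hΦ i).congr_fun (fun a ha => by rw [hq i a ha]) (hCmeas i)

theorem integral_comp_eq_sum_of_eq_on_cells [NormedSpace ℝ G] [Fintype ι]
    (hCmeas : ∀ i, MeasurableSet (C i)) (hCdisj : Pairwise (Function.onFun Disjoint C))
    (hae : ∀ᵐ a ∂μ, a ∈ ⋃ i, C i) {q : α → β} {x : ι → β} (hq : ∀ i, ∀ a ∈ C i, q a = x i)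
    {Φ : β → α → G} (hΦ : ∀ i, IntegrableOn (Φ (x i)) (C i) μ) :
    ∫ a, Φ (q a) a ∂μ = ∑ i, ∫ a in C i, Φ (x i) a ∂μ := by
  have hint : IntegrableOn (fun a => Φ (q a) a) (⋃ i, C i) μ := by
    rw [IntegrableOn, Measure.restrict_eq_self_of_ae_mem hae]
    exact integrable_comp_of_eq_on_cells hCmeas hae hq hΦ
  calc ∫ a, Φ (q a) a ∂μ = ∫ a in ⋃ i, C i, Φ (q a) a ∂μ := by
        rw [Measure.restrict_eq_self_of_ae_mem hae]
    _ = ∑ i, ∫ a in C i, Φ (x i) a ∂μ := by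
        rw [integral_iUnion hCmeas hCdisj hint, tsum_fintype]
        exact Finset.sum_congr rfl fun i _ =>
          setIntegral_congr_fun (hCmeas i) fun a ha => by rw [hq i a ha]

end Cells

section Barycenter

variable {E : Type*} [NormedAddCommGroup E] [InnerProductSpace ℝ E] [CompleteSpace E]
  [MeasurableSpace E] {μ : Measure E} [IsFiniteMeasure μ] {s : Set E}

theorem setIntegral_inner_sub_eq_zero_of_barycenter (hint : IntegrableOn (fun ξ => ξ) s μ)
    {c : E} (hc : μ s ≠ 0 → μ.real s • c = ∫ ξ in s, ξ ∂μ) (v : E) :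
    ∫ ξ in s, ⟪v, ξ - c⟫_ℝ ∂μ = 0 := by
  by_cases hs : μ s = 0
  · rw [Measure.restrict_eq_zero.2 hs, integral_zero_measure]
  · have hconst : IntegrableOn (fun _ => c) s μ := integrableOn_const (measure_ne_top μ s)
    have hsub : IntegrableOn (fun ξ => ξ - c) s μ := hint.sub hconst
    rw [integral_inner hsub, integral_sub hint hconst, setIntegral_const,
      ← hc hs, sub_self, inner_zero_right]

end Barycenter

end MeasureTheory

open MeasureTheory in
theorem stmt_13_general {d : ℕ} (U : Set (EuclideanSpace ℝ (Fin d)))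
    (F : EuclideanSpace ℝ (Fin d) → ℝ)
    (f : EuclideanSpace ℝ (Fin d) → EuclideanSpace ℝ (Fin d))
    (P : Measure (EuclideanSpace ℝ (Fin d))) [IsProbabilityMeasure P]
    (hPU : P U = 1)
    (hmom : Integrable (fun ξ => ξ) P)
    (hFint : Integrable F P)
    (n : ℕ) (x : Fin n → EuclideanSpace ℝ (Fin d))
    (C : Fin n → Set (EuclideanSpace ℝ (Fin d)))
    (hCmeas : ∀ i, MeasurableSet (C i))
    (hCdisj : Pairwise (Function.onFun Disjoint C))
    (hCcover : (⋃ i, C i) = U)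
    (hstat : ∀ i, P (C i) ≠ 0 →
      (P (C i)).toReal • x i = ∫ ξ in C i, ξ ∂P)
    (q : EuclideanSpace ℝ (Fin d) → EuclideanSpace ℝ (Fin d))
    (hq : ∀ i, ∀ ξ ∈ C i, q ξ = x i) :
    ∫ ξ, bregman F f ξ (q ξ) ∂P = (∫ ξ, F ξ ∂P) - ∫ ξ, F (q ξ) ∂P := by
  have hae : ∀ᵐ ξ ∂P, ξ ∈ ⋃ i, C i :=
    (ae_iff_measure_eq (MeasurableSet.iUnion hCmeas).nullMeasurableSet).2 <| by
      show P (⋃ i, C i) = P Set.univ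
      rw [measure_univ, hCcover, hPU]
  have hFq : Integrable (fun ξ => F (q ξ)) P :=
    integrable_comp_of_eq_on_cells (Φ := fun y _ => F y) hCmeas hae hq fun i =>
      integrableOn_const (measure_ne_top P _)
  have hcross_int : ∀ i, IntegrableOn (fun ξ => ⟪f (x i), ξ - x i⟫_ℝ) (C i) P := fun i =>
    ((hmom.sub (integrable_const (x i))).const_inner (f (x i))).integrableOn
  have hcross : ∫ ξ, ⟪f (q ξ), ξ - q ξ⟫_ℝ ∂P = 0 := by
    rw [integral_comp_eq_sum_of_eq_on_cells (Φ := fun y ξ => ⟪f y, ξ - y⟫_ℝ)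
      hCmeas hCdisj hae hq hcross_int]
    exact Finset.sum_eq_zero fun i _ =>
      setIntegral_inner_sub_eq_zero_of_barycenter hmom.integrableOn (hstat i) (f (x i))
  have hdiff : Integrable (fun ξ => F ξ - F (q ξ)) P := hFint.sub hFq
  simp only [bregman]
  rw [integral_sub hdiff
      (integrable_comp_of_eq_on_cells (Φ := fun y ξ => ⟪f y, ξ - y⟫_ℝ) hCmeas hae hq hcross_int),
    integral_sub hFint hFq, hcross, sub_zero]

open MeasureTheory in
theorem stmt_13 {d : ℕ} (U : Set (EuclideanSpace ℝ (Fin d)))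
    (hUopen : IsOpen U) (hUconv : Convex ℝ U)
    (F : EuclideanSpace ℝ (Fin d) → ℝ)
    (f : EuclideanSpace ℝ (Fin d) → EuclideanSpace ℝ (Fin d))
    (hF : ContDiffOn ℝ 1 F U)
    (hgrad : ∀ x ∈ U, HasGradientAt F (f x) x)
    (hconv : StrictConvexOn ℝ U F)
    (P : Measure (EuclideanSpace ℝ (Fin d))) [IsProbabilityMeasure P]
    (hPU : P U = 1)
    (hmom : Integrable (fun ξ => ξ) P)
    (hFint : Integrable F P)
    (n : ℕ) (x : Fin n → EuclideanSpace ℝ (Fin d)) (hx : ∀ i, x i ∈ U)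
    (C : Fin n → Set (EuclideanSpace ℝ (Fin d)))
    (hCmeas : ∀ i, MeasurableSet (C i))
    (hCdisj : Pairwise (Function.onFun Disjoint C))
    (hCcover : (⋃ i, C i) = U)
    (hCvor : ∀ i, C i ⊆
      {ξ ∈ U | ∀ j, bregman F f ξ (x i) ≤ bregman F f ξ (x j)})
    (hbound : ∀ i, P (frontier (C i)) = 0)
    (hstat : ∀ i, P (C i) ≠ 0 →
      (P (C i)).toReal • x i = ∫ ξ in C i, ξ ∂P)
    (q : EuclideanSpace ℝ (Fin d) → EuclideanSpace ℝ (Fin d))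
    (hq : ∀ i, ∀ ξ ∈ C i, q ξ = x i) :
    ∫ ξ, bregman F f ξ (q ξ) ∂P = (∫ ξ, F ξ ∂P) - ∫ ξ, F (q ξ) ∂P :=
  stmt_13_general U F f P hPU hmom hFint n x C hCmeas hCdisj hCcover hstat q hq
end

section
/- Let A = (a_{ij}) be an n×n symmetric tridiagonal real matrix with a_{ii} ≥ 0, a_{i,i±1} < 0 for all relevant indices, and row sums L_i = Σ_j a_{ij} ≥ 0 for all i, with additionally L_1 > 0 or L_n > 0. Then all eigenvalues of A are strictly positive. -/
theorem stmt_14 {n : ℕ} (hn : 0 < n) (A : Matrix (Fin n) (Fin n) ℝ)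
    (hsymm : A.IsSymm)
    (htridiag : ∀ i j : Fin n, 1 < ((i : ℤ) - (j : ℤ)).natAbs → A i j = 0)
    (hdiag : ∀ i : Fin n, 0 ≤ A i i)
    (hoff : ∀ i j : Fin n, ((i : ℤ) - (j : ℤ)).natAbs = 1 → A i j < 0)
    (hrow : ∀ i : Fin n, 0 ≤ ∑ j, A i j)
    (hfirstlast : 0 < ∑ j, A ⟨0, hn⟩ j ∨ 0 < ∑ j, A ⟨n - 1, by omega⟩ j) :
    ∀ (μ : ℝ) (v : Fin n → ℝ), v ≠ 0 → A.mulVec v = μ • v → 0 < μ := by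
  intro μ v hv hAv
  by_contra hμ
  push_neg at hμ
  -- Q : quadratic form
  set Q : ℝ := ∑ i, ∑ j, v i * (A i j * v j) with hQdef
  have hQ : Q = μ * ∑ i, v i ^ 2 := by
    have h1 : ∀ i, ∑ j, A i j * v j = μ * v i := by
      intro i
      have := congrFun hAv i
      simpa [Matrix.mulVec, dotProduct] using this
    calc Q = ∑ i, v i * (μ * v i) := by
            apply Finset.sum_congr rfl
            intro i _
            rw [← Finset.mul_sum, h1 i]
          _ = μ * ∑ i, v i ^ 2 := by
            rw [Finset.mul_sum]; apply Finset.sum_congr rfl; intro i _; ring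
  set S1 : ℝ := ∑ i, ∑ j, (-A i j) * (v i - v j) ^ 2 with hS1def
  set S2 : ℝ := ∑ i, (∑ j, A i j) * v i ^ 2 with hS2def
  -- key identity
  have hT : ∑ i, ∑ j, A i j * v j ^ 2 = ∑ i, ∑ j, A i j * v i ^ 2 := by
    rw [Finset.sum_comm]
    apply Finset.sum_congr rfl; intro i _
    apply Finset.sum_congr rfl; intro j _
    rw [hsymm.apply i j]
  have key : S1 = 2 * Q - 2 * S2 := by
    have hS2' : S2 = ∑ i, ∑ j, A i j * v i ^ 2 := by
      rw [hS2def]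
      apply Finset.sum_congr rfl; intro i _
      rw [Finset.sum_mul]
    have expand : S1 = ∑ i, ∑ j, (2 * (v i * (A i j * v j)) - A i j * v i ^ 2 - A i j * v j ^ 2) := by
      rw [hS1def]
      apply Finset.sum_congr rfl; intro i _
      apply Finset.sum_congr rfl; intro j _
      ring
    rw [expand]
    have : ∀ i : Fin n, ∑ j, (2 * (v i * (A i j * v j)) - A i j * v i ^ 2 - A i j * v j ^ 2)
        = (∑ j, 2 * (v i * (A i j * v j))) - (∑ j, A i j * v i ^ 2) - (∑ j, A i j * v j ^ 2) := by
      intro i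
      rw [← Finset.sum_sub_distrib, ← Finset.sum_sub_distrib]
    simp_rw [this]
    rw [Finset.sum_sub_distrib, Finset.sum_sub_distrib, hT, ← hS2']
    rw [hQdef]
    rw [Finset.mul_sum]
    simp_rw [Finset.mul_sum]
    ring
  -- nonnegativity of S1 terms
  have hterm : ∀ i j : Fin n, 0 ≤ (-A i j) * (v i - v j) ^ 2 := by
    intro i j
    rcases lt_trichotomy (((i : ℤ) - (j : ℤ)).natAbs) 1 with h | h | h
    · have hij : i = j := by
        apply Fin.ext
        omega
      simp [hij]
    · have := hoff i j h
      nlinarith [sq_nonneg (v i - v j)]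
    · rw [htridiag i j h]; simp
  have hS1nonneg : 0 ≤ S1 :=
    Finset.sum_nonneg fun i _ => Finset.sum_nonneg fun j _ => hterm i j
  have hS2term : ∀ i : Fin n, 0 ≤ (∑ j, A i j) * v i ^ 2 :=
    fun i => mul_nonneg (hrow i) (sq_nonneg _)
  have hS2nonneg : 0 ≤ S2 := Finset.sum_nonneg fun i _ => hS2term i
  have hsumsq : 0 ≤ ∑ i, v i ^ 2 := Finset.sum_nonneg fun i _ => sq_nonneg _
  have hQle : Q ≤ 0 := by
    rw [hQ]; exact mul_nonpos_of_nonpos_of_nonneg hμ hsumsq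
  have hS1zero : S1 = 0 := by linarith
  have hS2zero : S2 = 0 := by linarith
  -- each S1 term zero
  have hterm0 : ∀ i j : Fin n, (-A i j) * (v i - v j) ^ 2 = 0 := by
    have h := (Finset.sum_eq_zero_iff_of_nonneg
      (fun i _ => Finset.sum_nonneg fun j _ => hterm i j)).mp hS1zero
    intro i j
    have hi := h i (Finset.mem_univ i)
    have := (Finset.sum_eq_zero_iff_of_nonneg (fun j _ => hterm i j)).mp hi
    exact this j (Finset.mem_univ j)
  -- adjacent values equal
  have hadj : ∀ i j : Fin n, ((i : ℤ) - (j : ℤ)).natAbs = 1 → v i = v j := by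
    intro i j h
    have hA := hoff i j h
    have h0 := hterm0 i j
    have : (v i - v j) ^ 2 = 0 := by
      rcases mul_eq_zero.mp h0 with h' | h'
      · exfalso; linarith
      · exact h'
    have := pow_eq_zero_iff (n := 2) (by norm_num) |>.mp this
    linarith
  -- v is constant
  have hconst : ∀ k (hk : k < n), v ⟨k, hk⟩ = v ⟨0, hn⟩ := by
    intro k
    induction k with
    | zero => intro hk; rfl
    | succ m ih =>
      intro hk
      have hm : m < n := by omega
      have : v ⟨m + 1, hk⟩ = v ⟨m, hm⟩ := by
        apply hadj
        simp
      rw [this, ih hm]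
  -- each S2 term zero
  have hS2t0 : ∀ i : Fin n, (∑ j, A i j) * v i ^ 2 = 0 := by
    have h := (Finset.sum_eq_zero_iff_of_nonneg (fun i _ => hS2term i)).mp hS2zero
    intro i; exact h i (Finset.mem_univ i)
  have hv0 : v ⟨0, hn⟩ = 0 := by
    rcases hfirstlast with hf | hl
    · have := hS2t0 ⟨0, hn⟩
      rcases mul_eq_zero.mp this with h' | h'
      · exfalso; linarith
      · have := pow_eq_zero_iff (n := 2) (by norm_num) |>.mp h'
        exact this
    · have := hS2t0 ⟨n - 1, by omega⟩
      rcases mul_eq_zero.mp this with h' | h'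
      · exfalso; linarith
      · have h0 : v ⟨n - 1, by omega⟩ = 0 :=
          pow_eq_zero_iff (n := 2) (by norm_num) |>.mp h'
        rw [← hconst (n - 1) (by omega), h0]
  apply hv
  funext i
  have : v i = v ⟨0, hn⟩ := by
    have := hconst i.val i.isLt
    simpa using this
  rw [this, hv0]; rfl
end

section
/- Let F be C¹ strictly convex on an open interval (a,b) ⊆ ℝ. For u < v in (a,b), define φ(u,v) = u + φ_F(u,v)/(F'(v) − F'(u)). Then for every ξ ∈ (a,b), φ_F(ξ,u) < φ_F(ξ,v) if and only if ξ < φ(u,v); moreover φ(u,v) = v − φ_F(v,u)/(F'(v) − F'(u)) and u < φ(u,v) < v. -/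
noncomputable def bregman1 (F Fp : ℝ → ℝ) (ξ x : ℝ) : ℝ :=
  F ξ - F x - Fp x * (ξ - x)

private lemma slope_bounds (a b : ℝ) (F Fp : ℝ → ℝ)
    (hF : ∀ x ∈ Set.Ioo a b, HasDerivAt F (Fp x) x)
    (hconv : StrictConvexOn ℝ (Set.Ioo a b) F)
    {x y : ℝ} (hx : x ∈ Set.Ioo a b) (hy : y ∈ Set.Ioo a b) (hxy : x < y) :
    Fp x < (F y - F x) / (y - x) ∧ (F y - F x) / (y - x) < Fp y := by
  set w := (x + y) / 2 with hw
  have hxw : x < w := by simp [hw]; linarith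
  have hwy : w < y := by simp [hw]; linarith
  have hwm : w ∈ Set.Ioo a b := ⟨lt_trans hx.1 hxw, lt_trans hwy hy.2⟩
  have h1 : Fp x ≤ slope F x w :=
    hconv.convexOn.le_slope_of_hasDerivAt hx hwm hxw (hF x hx)
  have h2 : (F w - F x) / (w - x) < (F y - F x) / (y - x) :=
    hconv.secant_strict_mono hx hwm hy hxw.ne' (hxw.trans hwy).ne' hwy
  have h3 : (F x - F y) / (x - y) < (F w - F y) / (w - y) :=
    hconv.secant_strict_mono hy hx hwm hxy.ne hwy.ne hxw
  have h4 : slope F w y ≤ Fp y :=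
    hconv.convexOn.slope_le_of_hasDerivAt hwm hy hwy (hF y hy)
  rw [slope_def_field] at h1 h4
  constructor
  · calc Fp x ≤ (F w - F x) / (w - x) := h1
      _ < (F y - F x) / (y - x) := h2
  · have e1 : (F x - F y) / (x - y) = (F y - F x) / (y - x) := by
      rw [← neg_div_neg_eq]; ring_nf
    have e2 : (F w - F y) / (w - y) = (F y - F w) / (y - w) := by
      rw [← neg_div_neg_eq]; ring_nf
    calc (F y - F x) / (y - x) = (F x - F y) / (x - y) := e1.symm
      _ < (F w - F y) / (w - y) := h3
      _ = (F y - F w) / (y - w) := e2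
      _ ≤ Fp y := h4

theorem stmt_15 (a b : ℝ) (hab : a < b)
    (F Fp : ℝ → ℝ)
    (hF : ∀ x ∈ Set.Ioo a b, HasDerivAt F (Fp x) x)
    (hFp : ContinuousOn Fp (Set.Ioo a b))
    (hconv : StrictConvexOn ℝ (Set.Ioo a b) F)
    (u v : ℝ) (hu : u ∈ Set.Ioo a b) (hv : v ∈ Set.Ioo a b) (huv : u < v) :
    (∀ ξ ∈ Set.Ioo a b,
      bregman1 F Fp ξ u < bregman1 F Fp ξ v ↔
        ξ < u + bregman1 F Fp u v / (Fp v - Fp u)) ∧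
    u + bregman1 F Fp u v / (Fp v - Fp u) =
      v - bregman1 F Fp v u / (Fp v - Fp u) ∧
    u < u + bregman1 F Fp u v / (Fp v - Fp u) ∧
    u + bregman1 F Fp u v / (Fp v - Fp u) < v := by
  obtain ⟨hs1, hs2⟩ := slope_bounds a b F Fp hF hconv hu hv huv
  have hvu : (0:ℝ) < v - u := by linarith
  have hD : 0 < Fp v - Fp u := by
    have := hs1.trans hs2
    linarith
  have hm1 : Fp u * (v - u) < F v - F u := by
    have := (lt_div_iff₀ hvu).mp hs1; linarith
  have hm2 : F v - F u < Fp v * (v - u) := by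
    have := (div_lt_iff₀ hvu).mp hs2; linarith
  have hBuv : 0 < bregman1 F Fp u v := by
    simp only [bregman1]; nlinarith
  have hBvu : 0 < bregman1 F Fp v u := by
    simp only [bregman1]; nlinarith
  have heq : u + bregman1 F Fp u v / (Fp v - Fp u) =
      v - bregman1 F Fp v u / (Fp v - Fp u) := by
    simp only [bregman1]
    field_simp
    ring
  refine ⟨?_, heq, ?_, ?_⟩
  · intro ξ hξ
    rw [← sub_lt_iff_lt_add', lt_div_iff₀ hD]
    simp only [bregman1]
    constructor <;> intro h <;> nlinarith
  · have : 0 < bregman1 F Fp u v / (Fp v - Fp u) := div_pos hBuv hD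
    linarith
  · rw [heq]
    have : 0 < bregman1 F Fp v u / (Fp v - Fp u) := div_pos hBvu hD
    linarith
end

section
/- Let F be C¹ strictly convex on an open interval I ⊆ ℝ, and let J = [a,b] ∩ ℝ ⊆ I (with a < b, at least one of a, b finite). Let π : I → J be the projection onto J (π(u) = a if u < a, π(u) = b if u > b, π(u) = u otherwise). Then for every ξ ∈ J and x ∈ I: φ_F(ξ, π(x)) ≤ φ_F(ξ, x). Consequently, for P supported in J, the n-level distortion G_n(x_1,…,x_n) = ∫ min_i φ_F(ξ,x_i) dP(ξ) satisfies G_n(π(x_1),…,π(x_n)) ≤ G_n(x_1,…,x_n). -/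
section aux

variable {I : Set ℝ} {F Fp : ℝ → ℝ}

lemma fp_mono (hF : ∀ x ∈ I, HasDerivAt F (Fp x) x) (hconv : StrictConvexOn ℝ I F)
    {x y : ℝ} (hx : x ∈ I) (hy : y ∈ I) (hxy : x ≤ y) : Fp x ≤ Fp y := by
  rcases eq_or_lt_of_le hxy with rfl | hxy
  · exact le_refl _
  · calc Fp x ≤ slope F x y :=
          hconv.convexOn.le_slope_of_hasDerivAt hx hy hxy (hF x hx)
      _ ≤ Fp y :=
          hconv.convexOn.slope_le_of_hasDerivWithinAt_Iio hx hy hxy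
            (hF y hy).hasDerivWithinAt

lemma bregman_nonneg_s18 (hF : ∀ x ∈ I, HasDerivAt F (Fp x) x)
    (hconv : StrictConvexOn ℝ I F) {x ξ : ℝ} (hx : x ∈ I) (hξ : ξ ∈ I) :
    0 ≤ bregman1 F Fp ξ x := by
  unfold bregman1
  rcases lt_trichotomy x ξ with h | rfl | h
  · have hs := hconv.convexOn.le_slope_of_hasDerivAt hx hξ h (hF x hx)
    rw [slope_def_field, le_div_iff₀ (by linarith)] at hs
    linarith
  · simp
  · have hs := hconv.convexOn.slope_le_of_hasDerivWithinAt_Iio hξ hx h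
      (hF x hx).hasDerivWithinAt
    rw [slope_def_field, div_le_iff₀ (by linarith)] at hs
    nlinarith

lemma bregman_key (hF : ∀ x ∈ I, HasDerivAt F (Fp x) x)
    (hconv : StrictConvexOn ℝ I F) {a b : ℝ} (hab : a < b)
    (hJ : Set.Icc a b ⊆ I) :
    ∀ ξ ∈ Set.Icc a b, ∀ x ∈ I,
      bregman1 F Fp ξ (max a (min b x)) ≤ bregman1 F Fp ξ x := by
  intro ξ hξ x hx
  obtain ⟨hξa, hξb⟩ := hξ
  have ha : a ∈ I := hJ ⟨le_refl a, hab.le⟩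
  have hb : b ∈ I := hJ ⟨hab.le, le_refl b⟩
  rcases lt_or_ge x a with hxa | hax
  · have hproj : max a (min b x) = a := by
      rw [min_eq_right (by linarith), max_eq_left (by linarith)]
    rw [hproj]
    have h1 : 0 ≤ bregman1 F Fp a x := bregman_nonneg_s18 hF hconv hx ha
    have h2 : Fp x ≤ Fp a := fp_mono hF hconv hx ha hxa.le
    unfold bregman1 at h1 ⊢
    nlinarith [mul_nonneg (sub_nonneg.mpr h2) (sub_nonneg.mpr hξa)]
  rcases le_or_gt x b with hxb | hbx
  · have hproj : max a (min b x) = x := by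
      rw [min_eq_right hxb, max_eq_right hax]
    rw [hproj]
  · have hproj : max a (min b x) = b := by
      rw [min_eq_left hbx.le, max_eq_right hab.le]
    rw [hproj]
    have h1 : 0 ≤ bregman1 F Fp b x := bregman_nonneg_s18 hF hconv hx hb
    have h2 : Fp b ≤ Fp x := fp_mono hF hconv hb hx hbx.le
    unfold bregman1 at h1 ⊢
    nlinarith [mul_nonneg (sub_nonneg.mpr h2) (sub_nonneg.mpr hξb)]

end aux

open MeasureTheory in
theorem stmt_18 (I : Set ℝ) (hIopen : IsOpen I) (hIconv : Convex ℝ I)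
    (F Fp : ℝ → ℝ)
    (hF : ∀ x ∈ I, HasDerivAt F (Fp x) x)
    (hconv : StrictConvexOn ℝ I F)
    (a b : ℝ) (hab : a < b) (hJ : Set.Icc a b ⊆ I) :
    (∀ ξ ∈ Set.Icc a b, ∀ x ∈ I,
      bregman1 F Fp ξ (max a (min b x)) ≤ bregman1 F Fp ξ x) ∧
    ∀ (P : Measure ℝ) [IsProbabilityMeasure P], P (Set.Icc a b) = 1 →
      ∀ (n : ℕ), 0 < n → ∀ (x : Fin n → ℝ), (∀ i, x i ∈ I) →
        ∫⁻ ξ, ENNReal.ofReal (⨅ i, bregman1 F Fp ξ (max a (min b (x i)))) ∂P ≤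
          ∫⁻ ξ, ENNReal.ofReal (⨅ i, bregman1 F Fp ξ (x i)) ∂P := by
  have key := bregman_key hF hconv hab hJ
  refine ⟨key, ?_⟩
  intro P _ hP n hn x hxI
  haveI : Nonempty (Fin n) := ⟨⟨0, hn⟩⟩
  refine lintegral_mono_ae ?_
  have hae : ∀ᵐ ξ ∂P, ξ ∈ Set.Icc a b := by
    rw [ae_iff]
    have : {ξ | ¬ ξ ∈ Set.Icc a b} = (Set.Icc a b)ᶜ := rfl
    rw [this, prob_compl_eq_zero_iff measurableSet_Icc]
    exact hP
  filter_upwards [hae] with ξ hξ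
  refine ENNReal.ofReal_le_ofReal ?_
  refine ciInf_mono ?_ ?_
  · exact (Set.finite_range _).bddBelow
  · intro i
    exact key ξ hξ (x i) (hxI i)
end
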